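/- arXiv:2311.08717 — 4 statements merged into one kernel-verified Lean document; each statement's English description precedes it below -/
import Mathlib

section
/- For natural numbers n ≥ m and any x (as a polynomial identity, hence for all integers x), the product of binomial coefficients satisfies C(x,n)·C(x,m) = Σ_{r=0}^{m} C(n+r, m)·C(m, r)·C(x, n+r). -/
/-- The polynomial binomial coefficient `C(x, k) = x(x-1)⋯(x-k+1)/k!`
evaluated at an integer `x`. -/
noncomputable def binomPoly (x : ℤ) (k : ℕ) : ℚ :=
  (∏ j ∈ Finset.range k, ((x : ℚ) - j)) / k.factorial

lemma prod_split (x : ℤ) (a b : ℕ) :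
    ∏ j ∈ Finset.range (a + b), ((x : ℚ) - j) =
      (∏ j ∈ Finset.range a, ((x : ℚ) - j)) *
        ∏ j ∈ Finset.range b, (((x - a : ℤ) : ℚ) - j) := by
  rw [Finset.prod_range_add]
  congr 1
  apply Finset.prod_congr rfl
  intro i _
  push_cast
  ring

lemma revision (x : ℤ) (m d : ℕ) :
    (((m + d).choose m : ℚ)) * binomPoly x (m + d) =
      binomPoly x m * binomPoly (x - m) d := by
  unfold binomPoly
  rw [prod_split]
  have hfac : ((m + d).factorial : ℚ) =
      ((m + d).choose m : ℚ) * m.factorial * d.factorial := by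
    have := Nat.choose_mul_factorial_mul_factorial (Nat.le_add_right m d)
    rw [Nat.add_sub_cancel_left] at this
    exact_mod_cast this.symm
  rw [hfac]
  have h1 : (m.factorial : ℚ) ≠ 0 := Nat.cast_ne_zero.mpr m.factorial_ne_zero
  have h2 : (d.factorial : ℚ) ≠ 0 := Nat.cast_ne_zero.mpr d.factorial_ne_zero
  have h3 : ((m + d).choose m : ℚ) ≠ 0 :=
    Nat.cast_ne_zero.mpr (Nat.choose_pos (Nat.le_add_right m d)).ne'
  field_simp

lemma pascal (x : ℤ) (k : ℕ) :
    binomPoly (x + 1) (k + 1) = binomPoly x (k + 1) + binomPoly x k := by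
  unfold binomPoly
  have hl : ∏ j ∈ Finset.range (k + 1), (((x + 1 : ℤ) : ℚ) - j) =
      ((x : ℚ) + 1) * ∏ j ∈ Finset.range k, ((x : ℚ) - j) := by
    rw [Finset.prod_range_succ',
      Finset.prod_congr rfl (fun i _ => by push_cast; ring :
        ∀ i ∈ Finset.range k, (((x + 1 : ℤ) : ℚ) - ((i + 1 : ℕ) : ℚ)) = (x : ℚ) - i)]
    push_cast
    ring
  rw [hl, Finset.prod_range_succ]
  have h1 : (k.factorial : ℚ) ≠ 0 := Nat.cast_ne_zero.mpr k.factorial_ne_zero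
  have h2 : ((k + 1).factorial : ℚ) ≠ 0 := Nat.cast_ne_zero.mpr (k + 1).factorial_ne_zero
  have hf : ((k + 1).factorial : ℚ) = (k + 1) * k.factorial := by
    rw [Nat.factorial_succ]; push_cast; ring
  rw [hf]
  field_simp
  ring

lemma vand (m : ℕ) : ∀ (n : ℕ) (y : ℤ),
    ∑ j ∈ Finset.range (n + 1), (m.choose j : ℚ) * binomPoly y (n - j) =
      binomPoly (y + m) n := by
  induction m with
  | zero =>
    intro n y
    rw [Finset.sum_eq_single 0]
    · simp [binomPoly]
    · intro b _ hb
      simp [Nat.choose_eq_zero_of_lt (Nat.pos_of_ne_zero hb)]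
    · simp
  | succ m ih =>
    intro n y
    cases n with
    | zero => simp [binomPoly]
    | succ n =>
      rw [Finset.sum_range_succ']
      have hsplit : ∀ j ∈ Finset.range (n + 1),
          ((m + 1).choose (j + 1) : ℚ) * binomPoly y (n + 1 - (j + 1)) =
            (m.choose j : ℚ) * binomPoly y (n - j)
              + (m.choose (j + 1) : ℚ) * binomPoly y (n - j) := by
        intro j _
        simp only [Nat.choose_succ_succ, Nat.succ_eq_add_one, Nat.cast_add,
          Nat.succ_sub_succ]
        ring
      rw [Finset.sum_congr rfl hsplit, Finset.sum_add_distrib]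
      have h2 : ∑ j ∈ Finset.range (n + 1), (m.choose (j + 1) : ℚ) * binomPoly y (n - j)
          + ((m + 1).choose 0 : ℚ) * binomPoly y (n + 1 - 0)
          = binomPoly (y + m) (n + 1) := by
        rw [← ih (n + 1) y]
        conv_rhs => rw [Finset.sum_range_succ']
        congr 1
        · apply Finset.sum_congr rfl
          intro j _
          rw [Nat.succ_sub_succ]
        · simp
      rw [add_assoc, h2, ih n y]
      have harg : y + ((m + 1 : ℕ) : ℤ) = (y + m) + 1 := by push_cast; ring
      rw [harg, pascal (y + m) n]
      ring

lemma key (m d : ℕ) (y : ℤ) :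
    ∑ r ∈ Finset.range (m + 1), (m.choose r : ℚ) * binomPoly y (d + r) =
      binomPoly (y + m) (d + m) := by
  rw [← vand m (d + m) y]
  rw [← Finset.sum_subset (Finset.range_subset_range.mpr (by omega : m + 1 ≤ d + m + 1))]
  · conv_rhs => rw [← Finset.sum_range_reflect]
    apply Finset.sum_congr rfl
    intro r hr
    rw [Finset.mem_range] at hr
    rw [show m + 1 - 1 - r = m - r from by omega,
      show d + m - (m - r) = d + r from by omega,
      Nat.choose_symm (by omega : r ≤ m)]
  · intro j _ hj
    rw [Finset.mem_range, not_lt] at hj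
    rw [Nat.choose_eq_zero_of_lt (by omega)]
    simp

/-- For `n ≥ m`, `C(x,n)·C(x,m) = Σ_{r=0}^{m} C(n+r,m)·C(m,r)·C(x,n+r)`
for all integers `x`. -/
theorem binomPoly_mul (n m : ℕ) (h : m ≤ n) (x : ℤ) :
    binomPoly x n * binomPoly x m =
      ∑ r ∈ Finset.range (m + 1),
        ((n + r).choose m : ℚ) * (m.choose r : ℚ) * binomPoly x (n + r) := by
  obtain ⟨d, rfl⟩ := Nat.exists_eq_add_of_le h
  have hterm : ∀ r ∈ Finset.range (m + 1),
      ((m + d + r).choose m : ℚ) * (m.choose r : ℚ) * binomPoly x (m + d + r) =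
        binomPoly x m * ((m.choose r : ℚ) * binomPoly (x - m) (d + r)) := by
    intro r _
    rw [show m + d + r = m + (d + r) from by omega]
    rw [mul_comm (((m + (d + r)).choose m : ℚ)) ((m.choose r : ℚ)), mul_assoc,
      revision x m (d + r)]
    ring
  rw [Finset.sum_congr rfl hterm, ← Finset.mul_sum, key m d (x - m),
    show x - m + m = x from by ring, show d + m = m + d from by omega]
  ring
end

section
/- For natural numbers n ≥ m and any natural number x, the product of multiset coefficients satisfies ((x multichoose n))·((x multichoose m)) = Σ_{r=0}^{m} (-1)^{m+r}·C(n+r, m)·C(m, r)·((x multichoose n+r)), where ((x multichoose k)) = C(x+k-1, k). -/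
/-- Falling factorial of an integer `t`: `t (t-1) ⋯ (t-k+1)`. -/
def descPoch (t : ℤ) : ℕ → ℤ
  | 0 => 1
  | k + 1 => descPoch t k * (t - k)

lemma descPoch_key (t : ℤ) (n : ℕ) : ∀ m : ℕ, m ≤ n →
    descPoch t n * descPoch t m =
      ∑ r ∈ Finset.range (m + 1),
        (m.choose r : ℤ) * (n.descFactorial (m - r) : ℤ) * descPoch t (n + r) := by
  intro m
  induction m with
  | zero => intro _; simp [descPoch]
  | succ m ih =>
    intro hmn
    have hm : m ≤ n := le_trans (Nat.le_succ m) hmn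
    have step : ∀ r : ℕ, descPoch t (n + r) * (t - m) =
        descPoch t (n + r + 1) + ((n : ℤ) + r - m) * descPoch t (n + r) := by
      intro r
      have : descPoch t (n + r + 1) = descPoch t (n + r) * (t - (n + r)) := rfl
      rw [this]
      ring
    calc descPoch t n * descPoch t (m + 1)
        = (descPoch t n * descPoch t m) * (t - m) := by
          show descPoch t n * (descPoch t m * (t - m)) = _; ring
      _ = ∑ r ∈ Finset.range (m + 1),
            (m.choose r : ℤ) * (n.descFactorial (m - r) : ℤ) *
              (descPoch t (n + r) * (t - m)) := by
          rw [ih hm, Finset.sum_mul]; apply Finset.sum_congr rfl; intro r _; ring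
      _ = (∑ r ∈ Finset.range (m + 1),
            (m.choose r : ℤ) * (n.descFactorial (m - r) : ℤ) * descPoch t (n + r + 1))
          + ∑ r ∈ Finset.range (m + 1),
            (m.choose r : ℤ) * (n.descFactorial (m - r) : ℤ) *
              (((n : ℤ) + r - m) * descPoch t (n + r)) := by
          rw [← Finset.sum_add_distrib]
          apply Finset.sum_congr rfl; intro r _; rw [step r]; ring
      _ = ∑ r ∈ Finset.range (m + 2),
            ((m + 1).choose r : ℤ) * (n.descFactorial (m + 1 - r) : ℤ) *
              descPoch t (n + r) := by
          -- second sum: descFactorial recurrence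
          have hsum2 : ∀ r ∈ Finset.range (m + 1),
              (m.choose r : ℤ) * (n.descFactorial (m - r) : ℤ) *
                (((n : ℤ) + r - m) * descPoch t (n + r)) =
              (m.choose r : ℤ) * (n.descFactorial (m + 1 - r) : ℤ) * descPoch t (n + r) := by
            intro r hr
            rw [Finset.mem_range] at hr
            have hrm : r ≤ m := Nat.lt_succ_iff.mp hr
            have h1 : m + 1 - r = (m - r) + 1 := by omega
            have h2 : n.descFactorial ((m - r) + 1) = (n - (m - r)) * n.descFactorial (m - r) := by
              rw [Nat.descFactorial_succ]
            have h3 : ((n - (m - r) : ℕ) : ℤ) = (n : ℤ) + r - m := by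
              have : m - r ≤ n := le_trans (Nat.sub_le m r) hm
              push_cast [Nat.cast_sub this, Nat.cast_sub hrm]
              ring
            rw [h1, h2]
            push_cast [h3]
            ring
          rw [Finset.sum_congr rfl hsum2]
          -- now manipulate the RHS
          rw [Finset.sum_range_succ' (fun r =>
            ((m + 1).choose r : ℤ) * (n.descFactorial (m + 1 - r) : ℤ) * descPoch t (n + r))]
          simp only [Nat.choose_succ_succ, Nat.choose_zero_right, Nat.cast_one, Nat.cast_add,
            Nat.sub_zero, Nat.add_zero, one_mul]
          have expand : ∀ r ∈ Finset.range (m + 1),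
              ((m.choose r : ℤ) + (m.choose (r + 1) : ℤ)) *
                (n.descFactorial (m + 1 - (r + 1)) : ℤ) * descPoch t (n + (r + 1)) =
              (m.choose r : ℤ) * (n.descFactorial (m - r) : ℤ) * descPoch t (n + r + 1)
              + (m.choose (r + 1) : ℤ) * (n.descFactorial (m - r) : ℤ) * descPoch t (n + r + 1) := by
            intro r _
            have : m + 1 - (r + 1) = m - r := by omega
            rw [this, ← add_assoc]
            ring
          rw [Finset.sum_congr rfl expand, Finset.sum_add_distrib]
          -- remaining: shifted-choose sum equals the (t-m)-part sum plus first term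
          have shift : (∑ r ∈ Finset.range (m + 1),
              (m.choose (r + 1) : ℤ) * (n.descFactorial (m - r) : ℤ) * descPoch t (n + r + 1))
              + (n.descFactorial (m + 1) : ℤ) * descPoch t n =
              ∑ r ∈ Finset.range (m + 1),
                (m.choose r : ℤ) * (n.descFactorial (m + 1 - r) : ℤ) * descPoch t (n + r) := by
            rw [Finset.sum_range_succ' (fun r =>
              (m.choose r : ℤ) * (n.descFactorial (m + 1 - r) : ℤ) * descPoch t (n + r))]
            simp only [Nat.choose_zero_right, Nat.cast_one, Nat.sub_zero, Nat.add_zero, one_mul]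
            rw [Finset.sum_range_succ (fun r =>
              (m.choose (r + 1) : ℤ) * (n.descFactorial (m - r) : ℤ) * descPoch t (n + r + 1))]
            simp only [Nat.choose_succ_self, Nat.cast_zero, zero_mul, add_zero]
            congr 1
            apply Finset.sum_congr rfl
            intro r _
            have : m + 1 - (r + 1) = m - r := by omega
            rw [this]
            ring_nf
          rw [← shift]
          ring

lemma descPoch_neg (x k : ℕ) :
    descPoch (-(x : ℤ)) k = (-1 : ℤ) ^ k * (x.ascFactorial k : ℤ) := by
  induction k with
  | zero => simp [descPoch]
  | succ k ih =>
    show descPoch (-(x : ℤ)) k * (-(x : ℤ) - k) = _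
    rw [ih, Nat.ascFactorial_succ]
    push_cast
    ring

lemma descFact_fact (n m r : ℕ) (hrm : r ≤ m) (hmn : m ≤ n) :
    n.descFactorial (m - r) * (n + r).factorial = (n + r).descFactorial m * n.factorial := by
  apply Nat.eq_of_mul_eq_mul_left (Nat.factorial_pos (n + r - m))
  have h1 : n + r - m = n - (m - r) := by omega
  calc (n + r - m).factorial * (n.descFactorial (m - r) * (n + r).factorial)
      = ((n - (m - r)).factorial * n.descFactorial (m - r)) * (n + r).factorial := by
        rw [h1]; ring
    _ = n.factorial * (n + r).factorial := by
        rw [Nat.factorial_mul_descFactorial (by omega : m - r ≤ n)]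
    _ = ((n + r - m).factorial * (n + r).descFactorial m) * n.factorial := by
        rw [Nat.factorial_mul_descFactorial (by omega : m ≤ n + r)]; ring
    _ = (n + r - m).factorial * ((n + r).descFactorial m * n.factorial) := by ring

/-- For `n ≥ m` and any natural `x`, the multiset coefficients
`((x multichoose k)) = C(x+k-1, k)` satisfy
`((x mc n))·((x mc m)) = Σ_{r=0}^m (-1)^{m+r} C(n+r,m) C(m,r) ((x mc n+r))`. -/
theorem multichoose_mul (n m : ℕ) (h : m ≤ n) (x : ℕ) :
    ((x + n - 1).choose n : ℤ) * ((x + m - 1).choose m : ℤ) =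
      ∑ r ∈ Finset.range (m + 1),
        (-1 : ℤ) ^ (m + r) * ((n + r).choose m : ℤ) * (m.choose r : ℤ) *
          ((x + (n + r) - 1).choose (n + r) : ℤ) := by
  have asc : ∀ k : ℕ, (x.ascFactorial k : ℤ) = (k.factorial : ℤ) * ((x + k - 1).choose k : ℤ) := by
    intro k
    exact_mod_cast congrArg (Nat.cast : ℕ → ℤ) (Nat.ascFactorial_eq_factorial_mul_choose' x k)
  have key := descPoch_key (-(x : ℤ)) n m h
  simp only [descPoch_neg] at key
  -- key : (-1)^n asc n * ((-1)^m asc m) = ∑ r, C(m,r) * d(n,m-r) * ((-1)^(n+r) asc (n+r))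
  have key2 : (x.ascFactorial n : ℤ) * (x.ascFactorial m : ℤ) =
      ∑ r ∈ Finset.range (m + 1),
        (-1 : ℤ) ^ (m + r) * (m.choose r : ℤ) * (n.descFactorial (m - r) : ℤ) *
          (x.ascFactorial (n + r) : ℤ) := by
    have := congrArg (fun z => (-1 : ℤ) ^ (n + m) * z) key
    rw [Finset.mul_sum] at this
    calc (x.ascFactorial n : ℤ) * (x.ascFactorial m : ℤ)
        = (-1 : ℤ) ^ (n + m) * ((-1 : ℤ) ^ n * (x.ascFactorial n : ℤ) *
            ((-1 : ℤ) ^ m * (x.ascFactorial m : ℤ))) := by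
          rw [show (-1 : ℤ) ^ (n + m) * ((-1 : ℤ) ^ n * (x.ascFactorial n : ℤ) *
            ((-1 : ℤ) ^ m * (x.ascFactorial m : ℤ))) =
            ((-1 : ℤ) ^ n * (-1 : ℤ) ^ n) * ((-1 : ℤ) ^ m * (-1 : ℤ) ^ m) *
              ((x.ascFactorial n : ℤ) * (x.ascFactorial m : ℤ)) by ring,
            ← pow_add, ← pow_add, Even.neg_one_pow ⟨n, rfl⟩, Even.neg_one_pow ⟨m, rfl⟩]
          ring
      _ = ∑ r ∈ Finset.range (m + 1),
            (-1 : ℤ) ^ (m + r) * (m.choose r : ℤ) * (n.descFactorial (m - r) : ℤ) *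
              (x.ascFactorial (n + r) : ℤ) := by
          rw [this]
          apply Finset.sum_congr rfl
          intro r _
          rw [show (-1 : ℤ) ^ (n + m) * ((m.choose r : ℤ) * (n.descFactorial (m - r) : ℤ) *
              ((-1 : ℤ) ^ (n + r) * (x.ascFactorial (n + r) : ℤ))) =
            ((-1 : ℤ) ^ n * (-1 : ℤ) ^ n) * ((-1 : ℤ) ^ (m + r)) * ((m.choose r : ℤ) *
              (n.descFactorial (m - r) : ℤ) * (x.ascFactorial (n + r) : ℤ)) by ring,
            ← pow_add, Even.neg_one_pow ⟨n, rfl⟩]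
          ring
  -- now divide by n! m!
  apply mul_left_cancel₀ (a := ((n.factorial : ℤ) * (m.factorial : ℤ)))
    (by positivity)
  rw [Finset.mul_sum]
  calc (n.factorial : ℤ) * (m.factorial : ℤ) *
        (((x + n - 1).choose n : ℤ) * ((x + m - 1).choose m : ℤ))
      = (x.ascFactorial n : ℤ) * (x.ascFactorial m : ℤ) := by rw [asc n, asc m]; ring
    _ = ∑ r ∈ Finset.range (m + 1),
          (-1 : ℤ) ^ (m + r) * (m.choose r : ℤ) * (n.descFactorial (m - r) : ℤ) *
            (x.ascFactorial (n + r) : ℤ) := key2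
    _ = _ := by
        apply Finset.sum_congr rfl
        intro r hr
        rw [Finset.mem_range] at hr
        have hrm : r ≤ m := Nat.lt_succ_iff.mp hr
        rw [asc (n + r)]
        have hd := descFact_fact n m r hrm h
        have hd' : (n.descFactorial (m - r) : ℤ) * ((n + r).factorial : ℤ) =
            ((n + r).descFactorial m : ℤ) * (n.factorial : ℤ) := by exact_mod_cast hd
        have hc : ((n + r).descFactorial m : ℤ) = ((n + r).choose m : ℤ) * (m.factorial : ℤ) := by
          rw [Nat.descFactorial_eq_factorial_mul_choose]
          push_cast
          ring
        calc (-1 : ℤ) ^ (m + r) * (m.choose r : ℤ) * (n.descFactorial (m - r) : ℤ) *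
              (((n + r).factorial : ℤ) * ((x + (n + r) - 1).choose (n + r) : ℤ))
            = (-1 : ℤ) ^ (m + r) * (m.choose r : ℤ) *
                ((n.descFactorial (m - r) : ℤ) * ((n + r).factorial : ℤ)) *
                ((x + (n + r) - 1).choose (n + r) : ℤ) := by ring
          _ = _ := by rw [hd', hc]; ring
end

section
/- For natural numbers n ≥ m and l, the number of pairs consisting of a shuffle of [n] with [l] and a shuffle of [m] with [l], namely C(l+n,n)·C(l+m,m), equals Σ_{r=0}^{m} (-1)^{m+r}·C(n+r, m)·C(m, r)·C(l+n+r, n+r). -/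
/-!
Expand `C(l+n+r, n+r) = Σ_j C(r,j) C(l+n, n+j)` by Vandermonde and exchange the sums. Since
`C(m,r) C(r,j) = C(m,j) C(m-j, r-j)`, the sum over `r` becomes `C(m,j)` times the `(m-j)`-th
forward difference of `x ↦ C(x, m)` at `n + j`, which is `C(n+j, j)`. Finally
`C(n+j, j) C(l+n, n+j) = C(l+n, n) C(l, j)`, and Vandermonde once more gives
`Σ_j C(m,j) C(l,j) = C(l+m, m)`.
-/

open Finset

theorem choose_add_add_eq_sum_range (a b r : ℕ) :
    (a + r).choose (b + r) = ∑ j ∈ range (r + 1), r.choose j * a.choose (b + j) := by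
  rw [Nat.add_choose_eq,
    Nat.sum_antidiagonal_eq_sum_range_succ (fun i k => a.choose i * r.choose k),
    show (b + r).succ = b + (r + 1) by omega, sum_range_add]
  have hlow : ∑ k ∈ range b, a.choose k * r.choose (b + r - k) = 0 :=
    sum_eq_zero fun k hk => by
      rw [Nat.choose_eq_zero_of_lt (show r < b + r - k by grind), mul_zero]
  rw [hlow, zero_add]
  refine sum_congr rfl fun j hj => ?_
  rw [show b + r - (b + j) = r - j by omega, Nat.choose_symm (by grind), mul_comm]

theorem choose_mul_add_choose_add (a b j : ℕ) :
    (b + j).choose j * (a + b).choose (b + j) = (a + b).choose b * a.choose j := by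
  rw [mul_comm, ← Nat.choose_symm_add, Nat.choose_mul (Nat.le_add_right b j), Nat.add_sub_cancel,
    Nat.add_sub_cancel_left]

theorem sum_range_neg_one_pow_mul_choose_mul_add_choose (k j x : ℕ) :
    ∑ s ∈ range (k + 1), (-1 : ℤ) ^ (k + s) * k.choose s * (x + s).choose (k + j) =
      x.choose j := by
  rw [← congr_fun (fwdDiff_iter_choose j k) x, fwdDiff_iter_eq_sum_shift]
  refine sum_congr rfl fun s hs => ?_
  have hsign : (-1 : ℤ) ^ (k + s) = (-1) ^ (k - s) := by
    rw [show k + s = k - s + 2 * s by grind, pow_add, pow_mul]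
    norm_num
  simp [hsign]

theorem sum_range_neg_one_pow_mul_add_choose_mul_choose_mul_choose {m j : ℕ} (hj : j ≤ m)
    (n : ℕ) :
    ∑ r ∈ range (m + 1), (-1 : ℤ) ^ (m + r) * (n + r).choose m * m.choose r * r.choose j =
      m.choose j * (n + j).choose j := by
  have hdiff := sum_range_neg_one_pow_mul_choose_mul_add_choose (m - j) j (n + j)
  rw [Nat.sub_add_cancel hj] at hdiff
  rw [show m + 1 = j + (m - j + 1) by omega, sum_range_add, ← hdiff, mul_sum]
  have hlow : ∑ r ∈ range j, (-1 : ℤ) ^ (m + r) * (n + r).choose m * m.choose r * r.choose j = 0 :=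
    sum_eq_zero fun r hr => by
      rw [Nat.choose_eq_zero_of_lt (show r < j by grind)]
      simp
  rw [hlow, zero_add]
  refine sum_congr rfl fun s _ => ?_
  have hmul : (m.choose (j + s) : ℤ) * (j + s).choose j = m.choose j * (m - j).choose s := by
    have h := Nat.choose_mul (n := m) (Nat.le_add_right j s)
    rw [Nat.add_sub_cancel_left] at h
    exact_mod_cast h
  have hsign : (-1 : ℤ) ^ (m + (j + s)) = (-1) ^ (m - j + s) := by
    rw [show m + (j + s) = m - j + s + 2 * j by omega, pow_add _ (m - j + s), pow_mul]
    norm_num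
  rw [hsign, show n + (j + s) = n + j + s by omega]
  linear_combination ((-1 : ℤ) ^ (m - j + s) * (n + j + s).choose m) * hmul

theorem shuffle_disjoint_union_count_general (n m l : ℕ) :
    ((l + n).choose n : ℤ) * ((l + m).choose m : ℤ) =
      ∑ r ∈ Finset.range (m + 1),
        (-1 : ℤ) ^ (m + r) * ((n + r).choose m : ℤ) * (m.choose r : ℤ) *
          ((l + n + r).choose (n + r) : ℤ) := by
  have hexpand : ∀ r ∈ range (m + 1), ((l + n + r).choose (n + r) : ℤ) =
      ∑ j ∈ range (m + 1), (r.choose j : ℤ) * (l + n).choose (n + j) := by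
    intro r hr
    rw [choose_add_add_eq_sum_range]
    push_cast
    refine sum_subset (range_subset_range.2 (by grind)) fun j _ hj => ?_
    rw [Nat.choose_eq_zero_of_lt (show r < j by grind)]
    simp
  symm
  calc _ = ∑ j ∈ range (m + 1), (∑ r ∈ range (m + 1),
          (-1 : ℤ) ^ (m + r) * (n + r).choose m * m.choose r * r.choose j) *
            (l + n).choose (n + j) := by
        simp_rw [sum_mul]
        rw [sum_comm]
        refine sum_congr rfl fun r hr => ?_
        rw [hexpand r hr, mul_sum]
        exact sum_congr rfl fun j _ => by ring
    _ = ∑ j ∈ range (m + 1), m.choose j * ((l + n).choose n * l.choose j : ℤ) := by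
        refine sum_congr rfl fun j hj => ?_
        rw [sum_range_neg_one_pow_mul_add_choose_mul_choose_mul_choose (by grind), mul_assoc,
          ← Nat.cast_mul, choose_mul_add_choose_add, Nat.cast_mul]
    _ = (l + n).choose n * (l + m).choose m := by
        have hvand := choose_add_add_eq_sum_range l 0 m
        simp only [zero_add] at hvand
        rw [hvand]
        push_cast
        rw [mul_sum]
        exact sum_congr rfl fun j _ => by ring

/-- The number of pairs of a shuffle of `[n]` with `[l]` and a shuffle of `[m]`
with `[l]`, namely `C(l+n,n)·C(l+m,m)`, equals
`Σ_{r=0}^m (-1)^{m+r} C(n+r,m) C(m,r) C(l+n+r, n+r)` for `n ≥ m`. -/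
theorem shuffle_disjoint_union_count (n m l : ℕ) (h : m ≤ n) :
    ((l + n).choose n : ℤ) * ((l + m).choose m : ℤ) =
      ∑ r ∈ Finset.range (m + 1),
        (-1 : ℤ) ^ (m + r) * ((n + r).choose m : ℤ) * (m.choose r : ℤ) *
          ((l + n + r).choose (n + r) : ℤ) :=
  shuffle_disjoint_union_count_general n m l
end

section
/- For every natural number n, C(n+3,3) − 6·C(n+4,4) + 6·C(n+5,5) = Σ_{k=0}^{n} C(k+2,2)^2. -/
lemma ch2 (m : ℕ) : ((m + 2).choose 2 : ℤ) * 2 = (m+1)*(m+2) := by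
  induction m with
  | zero => decide
  | succ k ih => rw [show k+1+2 = (k+2)+1 from rfl, Nat.choose_succ_succ]
                 push_cast
                 have : ((k+2).choose 1 : ℤ) = (k+2) := by simp [Nat.choose_one_right]
                 nlinarith [ih]

lemma ch3 (m : ℕ) : ((m + 3).choose 3 : ℤ) * 6 = (m+1)*(m+2)*(m+3) := by
  induction m with
  | zero => decide
  | succ k ih => rw [show k+1+3 = (k+3)+1 from rfl, Nat.choose_succ_succ]
                 push_cast
                 have h2 := ch2 (k+1)
                 push_cast at h2
                 nlinarith [ih, h2]

lemma ch4 (m : ℕ) : ((m + 4).choose 4 : ℤ) * 24 = (m+1)*(m+2)*(m+3)*(m+4) := by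
  induction m with
  | zero => decide
  | succ k ih => rw [show k+1+4 = (k+4)+1 from rfl, Nat.choose_succ_succ]
                 push_cast
                 have h3 := ch3 (k+1)
                 push_cast at h3
                 nlinarith [ih, h3]
lemma ch5 (m : ℕ) : ((m + 5).choose 5 : ℤ) * 120 = (m+1)*(m+2)*(m+3)*(m+4)*(m+5) := by
  induction m with
  | zero => decide
  | succ k ih => rw [show k+1+5 = (k+5)+1 from rfl, Nat.choose_succ_succ]
                 push_cast
                 have h4 := ch4 (k+1)
                 push_cast at h4
                 nlinarith [ih, h4]

/-- `C(n+3,3) − 6·C(n+4,4) + 6·C(n+5,5) = Σ_{k=0}^{n} C(k+2,2)^2`. -/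
theorem shuffle_count_identity (n : ℕ) :
    ((n + 3).choose 3 : ℤ) - 6 * ((n + 4).choose 4 : ℤ) +
        6 * ((n + 5).choose 5 : ℤ) =
      ∑ k ∈ Finset.range (n + 1), (((k + 2).choose 2 : ℤ)) ^ 2 := by
  induction n with
  | zero => decide
  | succ m ih =>
    rw [Finset.sum_range_succ, ← ih]
    have h3 := ch3 (m+1); have h3' := ch3 m
    have h4 := ch4 (m+1); have h4' := ch4 m
    have h5 := ch5 (m+1); have h5' := ch5 m
    have h2 := ch2 (m+1)
    push_cast at *
    nlinarith [h2, h3, h3', h4, h4', h5, h5', sq_nonneg ((m:ℤ)+2)]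
end
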